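/- Let 𝒞 ⊆ ℝ^{n+m} be a proper C-set, let A ∈ ℝ^{n×n}, B ∈ ℝ^{n×m}, and let ℒ ⊆ ℝⁿ be a proper C-set verifying the control Lyapunov decrease condition (for every x ∈ ℝⁿ there exists u ∈ ℝᵐ with γ(ℒ, Ax+Bu) + γ(𝒞, (x,u)) ≤ γ(ℒ, x)). Define 𝒦⁺ = (𝒞* ⊕ Mᵀℒ*)* and ℒ⁺ = P_x𝒦⁺. Then: (a) 𝒦⁺ is a proper C-set in ℝ^{n+m} and ℒ⁺ is a proper C-set in ℝⁿ; (b) for every (x,u) ∈ ℝⁿ × ℝᵐ, γ(𝒦⁺,(x,u)) = γ(ℒ, Ax+Bu) + γ(𝒞,(x,u)); and (c) for every x ∈ ℝⁿ there exists u ∈ ℝᵐ such that γ(ℒ⁺, x) ≤ γ(𝒦⁺,(x,u)) ≤ γ(ℒ, x). -/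

import Mathlib

open Pointwise Filter Topology Matrix

noncomputable section

/-- ℝⁿ with the standard (Euclidean) inner product. -/
abbrev Rsp (n : ℕ) := EuclideanSpace ℝ (Fin n)

/-- ℝ^{n+m} realized as the L²-product ℝⁿ × ℝᵐ. -/
abbrev Rsp2 (n m : ℕ) := WithLp 2 (Rsp n × Rsp m)

/-- A C-set: compact, convex, containing the origin. -/
def IsCSet {E : Type*} [NormedAddCommGroup E] [NormedSpace ℝ E] (X : Set E) : Prop :=
  IsCompact X ∧ Convex ℝ X ∧ (0 : E) ∈ X

/-- A proper C-set: a C-set containing the origin in its interior. -/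
def IsProperCSet {E : Type*} [NormedAddCommGroup E] [NormedSpace ℝ E] (X : Set E) : Prop :=
  IsCSet X ∧ (0 : E) ∈ interior X

/-- The polar set 𝒳* = {y : ⟨y,x⟩ ≤ 1 for all x ∈ 𝒳}. -/
def polarSet {E : Type*} [NormedAddCommGroup E] [InnerProductSpace ℝ E] (X : Set E) : Set E :=
  {y | ∀ x ∈ X, inner ℝ y x ≤ (1 : ℝ)}

/-- The Minkowski (gauge) function γ(𝒳,y) = inf{η ≥ 0 : y ∈ η𝒳}. -/
def mgauge {E : Type*} [NormedAddCommGroup E] [NormedSpace ℝ E] (X : Set E) (y : E) : ℝ :=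
  sInf {η : ℝ | 0 ≤ η ∧ y ∈ η • X}

variable {n m : ℕ}

/-- The map M = (A B) : ℝ^{n+m} → ℝⁿ, M(x,u) = Ax + Bu. -/
def Mfwd (A : Matrix (Fin n) (Fin n) ℝ) (B : Matrix (Fin n) (Fin m) ℝ) (w : Rsp2 n m) : Rsp n :=
  Matrix.toEuclideanLin A w.ofLp.1 + Matrix.toEuclideanLin B w.ofLp.2

/-- The transpose map Mᵀ : ℝⁿ → ℝ^{n+m}, Mᵀp = (Aᵀp, Bᵀp). -/
def Mtr (A : Matrix (Fin n) (Fin n) ℝ) (B : Matrix (Fin n) (Fin m) ℝ) (p : Rsp n) : Rsp2 n m :=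
  WithLp.toLp 2 (Matrix.toEuclideanLin Aᵀ p, Matrix.toEuclideanLin Bᵀ p)

/-- The projection P_x : ℝ^{n+m} → ℝⁿ, (x,u) ↦ x. -/
def Pxproj : Rsp2 n m → Rsp n := fun w => w.ofLp.1

/-!
Polarity turns the Minkowski sum `𝒞* ⊕ Mᵀℒ*` into a sum of support functions. The gauge of the
polar of a compact set `S ∋ 0` is the support function `h_S`; support functions add under
Minkowski sums; `h_{Mᵀℒ*}(w) = h_{ℒ*}(M w)`; and, by the bipolar theorem, `h_{𝒳*} = γ(𝒳)` for a
proper C-set `𝒳`. Together these give `γ(𝒦⁺, w) = γ(ℒ, M w) + γ(𝒞, w)`, and the Lyapunov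
inequality then bounds it by `γ(ℒ, x)` for a suitable `u`, while `γ(P_x 𝒦⁺, x) ≤ γ(𝒦⁺, (x, u))`
always. Properness of `𝒦⁺` holds because polarity exchanges boundedness with having `0` in the
interior, and that of `ℒ⁺` by the open mapping theorem.
-/

open scoped RealInnerProductSpace InnerProduct

section Polar

variable {E : Type*} [NormedAddCommGroup E] [InnerProductSpace ℝ E]

lemma zero_mem_polarSet (X : Set E) : (0 : E) ∈ polarSet X := by
  intro x _
  simp

lemma convex_polarSet (X : Set E) : Convex ℝ (polarSet X) := by
  intro y hy z hz a b ha hb hab x hx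
  rw [inner_add_left, real_inner_smul_left, real_inner_smul_left]
  nlinarith [hy x hx, hz x hx]

lemma isClosed_polarSet (X : Set E) : IsClosed (polarSet X) := by
  simp only [polarSet, Set.ofPred_forall]
  exact isClosed_biInter fun x _ => isClosed_le (continuous_id.inner continuous_const)
    continuous_const

lemma mem_smul_polarSet {X : Set E} {w : E} {η : ℝ} (hη : 0 < η) :
    w ∈ η • polarSet X ↔ ∀ x ∈ X, ⟪x, w⟫ ≤ η := by
  simp only [Set.mem_smul_set_iff_inv_smul_mem₀ hη.ne', polarSet, Set.mem_ofPred_eq,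
    real_inner_smul_left, inv_mul_le_iff₀ hη, mul_one, real_inner_comm w]

lemma isBounded_polarSet {X : Set E} (hX : X ∈ 𝓝 0) : Bornology.IsBounded (polarSet X) := by
  obtain ⟨ε, hε, hball⟩ := Metric.mem_nhds_iff.1 hX
  refine (Metric.isBounded_closedBall (x := 0) (r := 2 / ε)).subset fun y hy => ?_
  rw [mem_closedBall_zero_iff, le_div_iff₀ hε]
  rcases eq_or_ne y 0 with rfl | hy0
  · simp
  -- test `y` against the point of norm `ε / 2` in its direction
  have hny : 0 < ‖y‖ := norm_pos_iff.2 hy0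
  have hx : (ε / (2 * ‖y‖)) • y ∈ X := hball <| by
    rw [mem_ball_zero_iff, norm_smul, Real.norm_of_nonneg (by positivity),
      div_mul_eq_mul_div, mul_div_mul_right _ _ hny.ne']
    linarith
  have := hy _ hx
  rw [real_inner_smul_right, real_inner_self_eq_norm_sq] at this
  field_simp at this
  linarith

lemma polarSet_mem_nhds_zero {X : Set E} (hX : Bornology.IsBounded X) : polarSet X ∈ 𝓝 0 := by
  obtain ⟨R, hR, hXR⟩ := hX.subset_closedBall_lt 0 0
  refine Metric.mem_nhds_iff.2 ⟨R⁻¹, inv_pos.2 hR, fun y hy x hx => ?_⟩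
  rw [mem_ball_zero_iff] at hy
  have hxR : ‖x‖ ≤ R := mem_closedBall_zero_iff.1 (hXR hx)
  calc ⟪y, x⟫ ≤ ‖y‖ * ‖x‖ := real_inner_le_norm y x
    _ ≤ R⁻¹ * R := mul_le_mul hy.le hxR (norm_nonneg x) (by positivity)
    _ = 1 := inv_mul_cancel₀ hR.ne'

lemma polarSet_polarSet [CompleteSpace E] {X : Set E} (hconv : Convex ℝ X) (hcl : IsClosed X)
    (h0 : (0 : E) ∈ X) : polarSet (polarSet X) = X := by
  refine subset_antisymm (fun z hz => ?_) fun x hx y hy => real_inner_comm x y ▸ hy x hx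
  by_contra hzX
  obtain ⟨f, u, hfX, hfz⟩ := geometric_hahn_banach_closed_point hconv hcl hzX
  have hu : 0 < u := by simpa using hfX 0 h0
  -- the separating functional, rescaled, lies in the polar of `X`
  set v : E := (InnerProductSpace.toDual ℝ E).symm f
  have hv : ∀ x, ⟪v, x⟫ = f x := fun x => InnerProductSpace.toDual_symm_apply
  have hvX : u⁻¹ • v ∈ polarSet X := fun x hx => by
    rw [real_inner_smul_left, hv, inv_mul_le_iff₀ hu, mul_one]
    exact (hfX x hx).le
  have := hz _ hvX
  rw [real_inner_smul_right, real_inner_comm, hv, inv_mul_le_iff₀ hu, mul_one] at this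
  exact hfz.not_ge this

lemma isProperCSet_polarSet [ProperSpace E] {X : Set E} (hX : IsProperCSet X) :
    IsProperCSet (polarSet X) :=
  ⟨⟨(isBounded_polarSet (mem_interior_iff_mem_nhds.1 hX.2)).isCompact_closure.of_isClosed_subset
      (isClosed_polarSet X) subset_closure, convex_polarSet X, zero_mem_polarSet X⟩,
    mem_interior_iff_mem_nhds.2 (polarSet_mem_nhds_zero hX.1.1.isBounded)⟩

end Polar

lemma mgauge_eq_gauge {E : Type*} [NormedAddCommGroup E] [NormedSpace ℝ E] {X : Set E}
    (hX : X.Nonempty) : mgauge X = gauge X := by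
  funext y
  rcases eq_or_ne y 0 with rfl | hy
  · rw [gauge_zero]
    exact IsLeast.csInf_eq ⟨⟨le_rfl, by simp [Set.zero_smul_set hX]⟩, fun _ h => h.1⟩
  · rw [mgauge, gauge_def]
    congr 1
    ext η
    refine ⟨fun ⟨hη, hyη⟩ => ⟨hη.lt_of_ne ?_, hyη⟩, fun ⟨hη, hyη⟩ => ⟨hη.le, hyη⟩⟩
    rintro rfl
    exact hy (by simpa [Set.zero_smul_set hX] using hyη)

lemma gauge_image_le {E F : Type*} [NormedAddCommGroup E] [NormedSpace ℝ E]
    [NormedAddCommGroup F] [NormedSpace ℝ F] (f : E →L[ℝ] F) {K : Set E} (hK : K ∈ 𝓝 0)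
    (w : E) : gauge (f '' K) (f w) ≤ gauge K w := by
  refine le_of_forall_gt fun a ha => ?_
  obtain ⟨b, hb, hba, hw⟩ := exists_lt_of_gauge_lt (absorbent_nhds_zero hK) ha
  refine (gauge_le_of_mem hb.le ?_).trans_lt hba
  rw [← image_smul_set]
  exact Set.mem_image_of_mem f hw

def supportFunction {E : Type*} [NormedAddCommGroup E] [InnerProductSpace ℝ E] (S : Set E)
    (w : E) : ℝ :=
  sSup ((fun p => ⟪p, w⟫) '' S)

section SupportFunction

variable {E : Type*} [NormedAddCommGroup E] [InnerProductSpace ℝ E]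

lemma le_supportFunction {S : Set E} (hS : IsCompact S) {x : E} (hx : x ∈ S) (w : E) :
    ⟪x, w⟫ ≤ supportFunction S w :=
  le_csSup (hS.image (continuous_id.inner continuous_const)).bddAbove ⟨x, hx, rfl⟩

lemma supportFunction_le {S : Set E} (hS : S.Nonempty) {w : E} {a : ℝ}
    (h : ∀ x ∈ S, ⟪x, w⟫ ≤ a) : supportFunction S w ≤ a :=
  csSup_le (hS.image _) (Set.forall_mem_image.2 h)

lemma supportFunction_add {S T : Set E} (hS : IsCompact S) (hS₀ : S.Nonempty)
    (hT : IsCompact T) (hT₀ : T.Nonempty) (w : E) :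
    supportFunction (S + T) w = supportFunction S w + supportFunction T w := by
  have himage : (fun p => ⟪p, w⟫) '' (S + T) = (fun p => ⟪p, w⟫) '' S + (fun p => ⟪p, w⟫) '' T :=
    Set.image_add ((innerₛₗ ℝ).flip w)
  rw [supportFunction, himage, csSup_add (hS₀.image _)
    (hS.image (continuous_id.inner continuous_const)).bddAbove (hT₀.image _)
    (hT.image (continuous_id.inner continuous_const)).bddAbove]
  rfl

lemma supportFunction_image {F : Type*} [NormedAddCommGroup F] [InnerProductSpace ℝ F]
    {f : E → F} {g : F → E} (hfg : ∀ p w, ⟪f p, w⟫ = ⟪p, g w⟫) (S : Set E) (w : F) :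
    supportFunction (f '' S) w = supportFunction S (g w) := by
  simp only [supportFunction, Set.image_image, hfg]

lemma gauge_polarSet {S : Set E} (hS : IsCompact S) (h₀ : (0 : E) ∈ S) (w : E) :
    gauge (polarSet S) w = supportFunction S w := by
  have hnonneg : 0 ≤ supportFunction S w := by simpa using le_supportFunction hS h₀ w
  refine le_antisymm (le_of_forall_pos_le_add fun ε hε => gauge_le_of_mem (by positivity)
    ((mem_smul_polarSet (by positivity)).2 fun x hx => ?_)) ?_
  · linarith [le_supportFunction hS hx w]
  refine supportFunction_le ⟨0, h₀⟩ fun x hx => le_of_not_gt fun hlt => ?_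
  have habs : Absorbent ℝ (polarSet S) := absorbent_nhds_zero (polarSet_mem_nhds_zero hS.isBounded)
  obtain ⟨r, hr, hrx, hw⟩ := exists_lt_of_gauge_lt habs hlt
  exact hrx.not_ge ((mem_smul_polarSet hr).1 hw x hx)

lemma gauge_eq_supportFunction_polarSet [ProperSpace E] {X : Set E}
    (hX : IsProperCSet X) : gauge X = supportFunction (polarSet X) := by
  funext w
  rw [← gauge_polarSet (isProperCSet_polarSet hX).1.1 (zero_mem_polarSet X),
    polarSet_polarSet hX.1.2.1 hX.1.1.isClosed hX.1.2.2]

end SupportFunction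

section ProperCSet

variable {E F : Type*} [NormedAddCommGroup E] [InnerProductSpace ℝ E] [ProperSpace E]
  [NormedAddCommGroup F] [InnerProductSpace ℝ F] [ProperSpace F]

lemma isProperCSet_polarSet_add_image {C : Set E} {L : Set F} (hC : IsProperCSet C)
    (hL : IsProperCSet L) (f : F →L[ℝ] E) :
    IsProperCSet (polarSet C + f '' polarSet L) := by
  have hC' := isProperCSet_polarSet hC
  have hL' := isProperCSet_polarSet hL
  have hf₀ : (0 : E) ∈ f '' polarSet L := ⟨0, hL'.1.2.2, map_zero f⟩
  have hsub : polarSet C ⊆ polarSet C + f '' polarSet L := fun p hp => by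
    simpa using Set.add_mem_add hp hf₀
  exact ⟨⟨hC'.1.1.add (hL'.1.1.image f.continuous),
    hC'.1.2.1.add (hL'.1.2.1.linear_image f.toLinearMap), hsub hC'.1.2.2⟩,
    interior_mono hsub hC'.2⟩

lemma gauge_polarSet_polarSet_add_adjoint_image {C : Set E} {L : Set F} (hC : IsProperCSet C)
    (hL : IsProperCSet L) (T : E →L[ℝ] F) (w : E) :
    gauge (polarSet (polarSet C + (T†) '' polarSet L)) w = gauge L (T w) + gauge C w := by
  have hC' := isProperCSet_polarSet hC
  have hL' := isProperCSet_polarSet hL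
  rw [gauge_polarSet (isProperCSet_polarSet_add_image hC hL (T†)).1.1
      (isProperCSet_polarSet_add_image hC hL (T†)).1.2.2,
    supportFunction_add hC'.1.1 ⟨0, hC'.1.2.2⟩ (hL'.1.1.image (T†).continuous)
      ⟨0, 0, hL'.1.2.2, map_zero _⟩,
    supportFunction_image fun p w => T.adjoint_inner_left w p,
    gauge_eq_supportFunction_polarSet hC, gauge_eq_supportFunction_polarSet hL, add_comm]

end ProperCSet

lemma isProperCSet_image {E F : Type*} [NormedAddCommGroup E] [NormedSpace ℝ E] [CompleteSpace E]
    [NormedAddCommGroup F] [NormedSpace ℝ F] [CompleteSpace F] {K : Set E} (hK : IsProperCSet K)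
    (f : E →L[ℝ] F) (hf : Function.Surjective f) : IsProperCSet (f '' K) :=
  ⟨⟨hK.1.1.image f.continuous, hK.1.2.1.linear_image f.toLinearMap, ⟨0, hK.1.2.2, map_zero f⟩⟩,
    (f.isOpenMap hf).image_interior_subset K ⟨0, hK.2, map_zero f⟩⟩

def MfwdCLM (A : Matrix (Fin n) (Fin n) ℝ) (B : Matrix (Fin n) (Fin m) ℝ) :
    Rsp2 n m →L[ℝ] Rsp n :=
  (Matrix.toEuclideanLin A).toContinuousLinearMap ∘L WithLp.fstL 2 ℝ (Rsp n) (Rsp m) +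
    (Matrix.toEuclideanLin B).toContinuousLinearMap ∘L WithLp.sndL 2 ℝ (Rsp n) (Rsp m)

lemma coe_MfwdCLM (A : Matrix (Fin n) (Fin n) ℝ) (B : Matrix (Fin n) (Fin m) ℝ) :
    ⇑(MfwdCLM A B) = Mfwd A B := rfl

lemma Pxproj_eq_fstL : (Pxproj : Rsp2 n m → Rsp n) = WithLp.fstL 2 ℝ (Rsp n) (Rsp m) := rfl

lemma fstL_surjective : Function.Surjective (WithLp.fstL 2 ℝ (Rsp n) (Rsp m)) :=
  fun x => ⟨WithLp.toLp 2 (x, 0), rfl⟩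

lemma inner_toEuclideanLin_transpose {k l : ℕ} (A : Matrix (Fin k) (Fin l) ℝ)
    (p : EuclideanSpace ℝ (Fin k)) (x : EuclideanSpace ℝ (Fin l)) :
    ⟪Matrix.toEuclideanLin Aᵀ p, x⟫ = ⟪p, Matrix.toEuclideanLin A x⟫ := by
  rw [← Matrix.conjTranspose_eq_transpose_of_trivial,
    Matrix.toEuclideanLin_conjTranspose_eq_adjoint]
  exact LinearMap.adjoint_inner_left _ _ _

lemma Mtr_eq_adjoint (A : Matrix (Fin n) (Fin n) ℝ) (B : Matrix (Fin n) (Fin m) ℝ) :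
    Mtr A B = ⇑((MfwdCLM A B)†) := by
  funext p
  refine ext_inner_right ℝ fun w => ?_
  rw [ContinuousLinearMap.adjoint_inner_left, coe_MfwdCLM, Mtr, WithLp.prod_inner_apply, Mfwd,
    inner_add_right, inner_toEuclideanLin_transpose, inner_toEuclideanLin_transpose]

/-- properties of 𝒦⁺ = (𝒞* ⊕ Mᵀℒ*)* and ℒ⁺ = P_x𝒦⁺ for a
Lyapunov proper C-set ℒ. -/
theorem stmt_7 (n m : ℕ) (C : Set (Rsp2 n m)) (hC : IsProperCSet C)
    (A : Matrix (Fin n) (Fin n) ℝ) (B : Matrix (Fin n) (Fin m) ℝ)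
    (L : Set (Rsp n)) (hL : IsProperCSet L)
    (hLyap : ∀ x : Rsp n, ∃ u : Rsp m,
      mgauge L (Mfwd A B (WithLp.toLp 2 (x, u))) + mgauge C (WithLp.toLp 2 (x, u) : Rsp2 n m) ≤ mgauge L x)
    (Kplus : Set (Rsp2 n m)) (hK : Kplus = polarSet (polarSet C + Mtr A B '' polarSet L))
    (Lplus : Set (Rsp n)) (hLp : Lplus = Pxproj '' Kplus) :
    (IsProperCSet Kplus ∧ IsProperCSet Lplus) ∧
    (∀ (x : Rsp n) (u : Rsp m),
      mgauge Kplus (WithLp.toLp 2 (x, u) : Rsp2 n m) =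
        mgauge L (Mfwd A B (WithLp.toLp 2 (x, u))) + mgauge C (WithLp.toLp 2 (x, u) : Rsp2 n m)) ∧
    (∀ x : Rsp n, ∃ u : Rsp m,
      mgauge Lplus x ≤ mgauge Kplus (WithLp.toLp 2 (x, u) : Rsp2 n m) ∧
      mgauge Kplus (WithLp.toLp 2 (x, u) : Rsp2 n m) ≤ mgauge L x) := by
  subst hK hLp
  rw [Mtr_eq_adjoint, Pxproj_eq_fstL]
  have hKproper := isProperCSet_polarSet (isProperCSet_polarSet_add_image hC hL ((MfwdCLM A B)†))
  have hLpproper := isProperCSet_image hKproper _ fstL_surjective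
  have hgauge (w : Rsp2 n m) : mgauge (polarSet (polarSet C + ⇑((MfwdCLM A B)†) '' polarSet L)) w
      = mgauge L (Mfwd A B w) + mgauge C w := by
    rw [mgauge_eq_gauge ⟨0, hKproper.1.2.2⟩, mgauge_eq_gauge ⟨0, hL.1.2.2⟩,
      mgauge_eq_gauge ⟨0, hC.1.2.2⟩, gauge_polarSet_polarSet_add_adjoint_image hC hL, coe_MfwdCLM]
  refine ⟨⟨hKproper, hLpproper⟩, fun x u => hgauge _, fun x => ?_⟩
  obtain ⟨u, hu⟩ := hLyap x
  refine ⟨u, ?_, (hgauge _).trans_le hu⟩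
  rw [mgauge_eq_gauge ⟨0, hLpproper.1.2.2⟩, mgauge_eq_gauge ⟨0, hKproper.1.2.2⟩]
  exact gauge_image_le (WithLp.fstL 2 ℝ (Rsp n) (Rsp m)) (mem_interior_iff_mem_nhds.1 hKproper.2)
    (WithLp.toLp 2 (x, u))
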